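/- Define the r-colored q-Stirling numbers S_r[n,k] by S_r[n,k] = S_r[n-1,k-1] + [rk+1]_q·S_r[n-1,k] with S_r[0,k]=δ_{0k}. Then for all n ≥ 0 and all t, t^n = Σ_{k=0}^{n} S_r[n,k] · (t - [1]_q)(t - [r+1]_q)···(t - [r(k-1)+1]_q), where the empty product (k=0) equals 1. -/
import Mathlib


open Finset Polynomial

/-- `[m]_q = 1 + q + ... + q^{m-1}`. -/
def qnat {R : Type*} [CommRing R] (q : R) (m : ℕ) : R := ∑ i ∈ Finset.range m, q ^ i

/-- The r-colored q-Stirling numbers of the second kind: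
`S_r[n,k] = S_r[n-1,k-1] + [rk+1]_q S_r[n-1,k]`, `S_r[0,k] = δ_{0k}`. -/
noncomputable def qStirR (r : ℕ) : ℕ → ℕ → Polynomial ℤ
  | 0, 0 => 1
  | 0, _ + 1 => 0
  | n + 1, 0 => qnat X (r * 0 + 1) * qStirR r n 0
  | n + 1, k + 1 => qStirR r n k + qnat X (r * (k + 1) + 1) * qStirR r n (k + 1)

lemma qStirR_eq_zero (r : ℕ) : ∀ n k : ℕ, n < k → qStirR r n k = 0 := by
  intro n
  induction n with
  | zero =>
    intro k hk
    match k, hk with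
    | k + 1, _ => simp [qStirR]
  | succ n ih =>
    intro k hk
    match k, hk with
    | k + 1, hk =>
      have h1 : qStirR r n k = 0 := ih k (Nat.lt_of_succ_lt_succ hk)
      have h2 : qStirR r n (k + 1) = 0 := ih (k + 1) (Nat.lt_of_succ_lt hk)
      simp [qStirR, h1, h2]

/-- `t^n = Σ_{k=0}^n S_r[n,k] (t-[1]_q)(t-[r+1]_q)⋯(t-[r(k-1)+1]_q)`, as an identity in
`ℤ[q][t]` (here `t` is the outer variable `X` and `q` the inner one). -/
theorem stmt14 (r n : ℕ) (hr : 1 ≤ r) :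
    (X : Polynomial (Polynomial ℤ)) ^ n =
      ∑ k ∈ Finset.range (n + 1),
        C (qStirR r n k) * ∏ i ∈ Finset.range k, (X - C (qnat X (r * i + 1))) := by
  induction n with
  | zero => simp [qStirR]
  | succ n ih =>
    have hz : qStirR r n (n + 1) = 0 := qStirR_eq_zero r n (n + 1) (Nat.lt_succ_self n)
    have h1 : (X : Polynomial (Polynomial ℤ)) ^ (n + 1)
        = (∑ k ∈ Finset.range (n + 1),
            C (qStirR r n k) * ∏ i ∈ Finset.range (k + 1), (X - C (qnat X (r * i + 1))))
        + ∑ k ∈ Finset.range (n + 1),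
            C (qnat X (r * k + 1)) * C (qStirR r n k)
              * ∏ i ∈ Finset.range k, (X - C (qnat X (r * i + 1))) := by
      rw [pow_succ, ih, Finset.sum_mul, ← Finset.sum_add_distrib]
      refine Finset.sum_congr rfl fun k _ => ?_
      rw [Finset.prod_range_succ]
      ring
    rw [h1]
    conv_rhs => rw [Finset.sum_range_succ']
    simp only [qStirR, map_add, map_mul, add_mul, Finset.sum_add_distrib,
      Finset.prod_range_zero, mul_one]
    rw [Finset.sum_range_succ' (fun k =>
      C (qnat X (r * k + 1)) * C (qStirR r n k) * ∏ i ∈ Finset.range k, (X - C (qnat X (r * i + 1)))) n,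
      Finset.sum_range_succ (fun k =>
      C (qnat X (r * (k + 1) + 1)) * C (qStirR r n (k + 1)) * ∏ i ∈ Finset.range (k + 1), (X - C (qnat X (r * i + 1)))) n]
    simp [hz]
    ring
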